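/- arXiv:1112.0483 — 2 statements merged into one kernel-verified Lean document; each statement's English description precedes it below -/
import Mathlib

section
/- For p, q > 1 and r, s ∈ (0,1), one has arcsin_{p,q}(r·s) ≤ √(arcsin_{p,q}(r²)·arcsin_{p,q}(s²)) ≤ arcsin_{p,q}(r)·arcsin_{p,q}(s). -/
/-!
With `f t = (1 - t ^ q) ^ (-1/p)`, the substitution `t = a u` gives
`arcsin_{p,q} a = a ∫₀¹ f (a u) du`. Since `(1 - t ^ q) ^ 2 ≥ (1 - x ^ q) (1 - y ^ q)` whenever
`t ^ 2 = x y` (AM-GM for `x ^ q, y ^ q`), one has `f (r s u) ≤ √(f (r² u)) √(f (s² u))`, and the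
Cauchy–Schwarz inequality in `u` gives the first inequality. For the second, `f` is increasing and
at least `1`, so `arcsin_{p,q} (x²) = x ∫₀ˣ f (x t) dt ≤ x arcsin_{p,q} x ≤ (arcsin_{p,q} x)²`.
-/

open Real Set

noncomputable def arcsinpq (p q x : ℝ) : ℝ :=
  ∫ t in (0:ℝ)..x, (1 - t ^ q) ^ (-1/p)

open MeasureTheory

theorem integral_sqrt_mul_sqrt_le {α : Type*} [MeasurableSpace α] {μ : Measure α}
    {f g : α → ℝ} (hf₀ : 0 ≤ᵐ[μ] f) (hg₀ : 0 ≤ᵐ[μ] g) (hf : Integrable f μ)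
    (hg : Integrable g μ) :
    ∫ x, √(f x) * √(g x) ∂μ ≤ √(∫ x, f x ∂μ) * √(∫ x, g x ∂μ) := by
  have memLp_sqrt : ∀ h : α → ℝ, 0 ≤ᵐ[μ] h → Integrable h μ →
      MemLp (fun x => √(h x)) (ENNReal.ofReal 2) μ := by
    intro h h₀ hi
    rw [ENNReal.ofReal_ofNat, memLp_two_iff_integrable_sq
      (continuous_sqrt.comp_aestronglyMeasurable hi.aestronglyMeasurable)]
    refine hi.congr ?_
    filter_upwards [h₀] with x hx
    simp [sq_sqrt hx]
  have integral_sqrt_rpow_two : ∀ h : α → ℝ, 0 ≤ᵐ[μ] h →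
      ∫ x, √(h x) ^ (2 : ℝ) ∂μ = ∫ x, h x ∂μ := by
    intro h h₀
    refine integral_congr_ae ?_
    filter_upwards [h₀] with x hx
    simp [sq_sqrt hx]
  have := integral_mul_le_Lp_mul_Lq_of_nonneg HolderConjugate.two_two
    (Filter.Eventually.of_forall fun x => sqrt_nonneg (f x))
    (Filter.Eventually.of_forall fun x => sqrt_nonneg (g x))
    (memLp_sqrt f hf₀ hf) (memLp_sqrt g hg₀ hg)
  rwa [integral_sqrt_rpow_two f hf₀, integral_sqrt_rpow_two g hg₀, ← sqrt_eq_rpow,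
    ← sqrt_eq_rpow] at this

noncomputable def arcsinpqIntegrand (p q t : ℝ) : ℝ := (1 - t ^ q) ^ (-1/p)

theorem arcsinpq_eq_integral (p q x : ℝ) :
    arcsinpq p q x = ∫ t in (0:ℝ)..x, arcsinpqIntegrand p q t := rfl

section

variable {p q : ℝ}

theorem one_sub_rpow_pos (hq : 0 < q) {t : ℝ} (ht : t ∈ Ico (0:ℝ) 1) : 0 < 1 - t ^ q := by
  rcases ht.1.eq_or_lt with rfl | -
  · simp [zero_rpow hq.ne']
  · linarith [rpow_lt_one ht.1 ht.2 hq]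

theorem neg_one_div_nonpos (hp : 0 < p) : -1 / p ≤ 0 := by
  rw [neg_div, neg_nonpos]; positivity

theorem one_le_arcsinpqIntegrand (hp : 0 < p) (hq : 0 < q) {t : ℝ} (ht : t ∈ Ico (0:ℝ) 1) :
    1 ≤ arcsinpqIntegrand p q t :=
  one_le_rpow_of_pos_of_le_one_of_nonpos (one_sub_rpow_pos hq ht)
    (by linarith [rpow_nonneg ht.1 q]) (neg_one_div_nonpos hp)

theorem arcsinpqIntegrand_nonneg (hp : 0 < p) (hq : 0 < q) {t : ℝ} (ht : t ∈ Ico (0:ℝ) 1) :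
    0 ≤ arcsinpqIntegrand p q t :=
  zero_le_one.trans (one_le_arcsinpqIntegrand hp hq ht)

theorem arcsinpqIntegrand_monotoneOn (hp : 0 < p) (hq : 0 < q) :
    MonotoneOn (arcsinpqIntegrand p q) (Ico 0 1) := fun s hs t ht hst =>
  rpow_le_rpow_of_nonpos (one_sub_rpow_pos hq ht)
    (by linarith [rpow_le_rpow hs.1 hst hq.le]) (neg_one_div_nonpos hp)

theorem arcsinpqIntegrand_continuousOn (hq : 0 < q) :
    ContinuousOn (arcsinpqIntegrand p q) (Ico 0 1) := fun t ht =>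
  ((continuousAt_const.sub (continuousAt_rpow_const t q (Or.inr hq.le))).rpow_const
    (Or.inl (one_sub_rpow_pos hq ht).ne')).continuousWithinAt

/-- Since `(c ^ q) ^ 2 = a ^ q * b ^ q`, AM-GM gives `2 c ^ q ≤ a ^ q + b ^ q`, hence
`(1 - a ^ q) * (1 - b ^ q) ≤ (1 - c ^ q) ^ 2`; the exponent `-1/p` reverses this. -/
theorem arcsinpqIntegrand_le_sqrt_mul_sqrt (hp : 0 < p) (hq : 0 < q) {a b c : ℝ}
    (ha : a ∈ Ico (0:ℝ) 1) (hb : b ∈ Ico (0:ℝ) 1) (hc : c ∈ Ico (0:ℝ) 1) (habc : c ^ 2 = a * b) :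
    arcsinpqIntegrand p q c ≤ √(arcsinpqIntegrand p q a) * √(arcsinpqIntegrand p q b) := by
  have hA := rpow_nonneg ha.1 q
  have hB := rpow_nonneg hb.1 q
  have hC := rpow_nonneg hc.1 q
  have hCAB : (c ^ q) ^ 2 = a ^ q * b ^ q := by
    rw [rpow_pow_comm hc.1, habc, mul_rpow ha.1 hb.1]
  have hmul : (1 - a ^ q) * (1 - b ^ q) ≤ (1 - c ^ q) ^ 2 := by
    nlinarith [sq_nonneg (a ^ q - b ^ q)]
  rw [← sqrt_mul (arcsinpqIntegrand_nonneg hp hq ha),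
    le_sqrt (arcsinpqIntegrand_nonneg hp hq hc)
      (mul_nonneg (arcsinpqIntegrand_nonneg hp hq ha) (arcsinpqIntegrand_nonneg hp hq hb))]
  calc arcsinpqIntegrand p q c ^ 2 = ((1 - c ^ q) ^ 2) ^ (-1/p) :=
        rpow_pow_comm (one_sub_rpow_pos hq hc).le _ 2
    _ ≤ ((1 - a ^ q) * (1 - b ^ q)) ^ (-1/p) :=
        rpow_le_rpow_of_nonpos (mul_pos (one_sub_rpow_pos hq ha) (one_sub_rpow_pos hq hb))
          hmul (neg_one_div_nonpos hp)
    _ = arcsinpqIntegrand p q a * arcsinpqIntegrand p q b :=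
        mul_rpow (one_sub_rpow_pos hq ha).le (one_sub_rpow_pos hq hb).le

theorem mul_mem_Ico_of_mem_Icc {a u : ℝ} (ha : a ∈ Ico (0:ℝ) 1) (hu : u ∈ Icc (0:ℝ) 1) :
    a * u ∈ Ico (0:ℝ) 1 :=
  ⟨mul_nonneg ha.1 hu.1, mul_lt_one_of_nonneg_of_lt_one_left ha.1 ha.2 hu.2⟩

theorem sq_mem_Ico {x : ℝ} (hx : x ∈ Ico (0:ℝ) 1) : x ^ 2 ∈ Ico (0:ℝ) 1 := by
  simpa only [sq] using mul_mem_Ico_of_mem_Icc hx (Ico_subset_Icc_self hx)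

theorem arcsinpqIntegrand_comp_mul_continuousOn (hq : 0 < q) {a : ℝ} (ha : a ∈ Ico (0:ℝ) 1) :
    ContinuousOn (fun u => arcsinpqIntegrand p q (a * u)) (Icc 0 1) :=
  (arcsinpqIntegrand_continuousOn hq).comp (continuous_const_mul a).continuousOn
    fun _ hu => mul_mem_Ico_of_mem_Icc ha hu

theorem integrableOn_arcsinpqIntegrand_comp_mul (hq : 0 < q) {a : ℝ} (ha : a ∈ Ico (0:ℝ) 1) :
    IntegrableOn (fun u => arcsinpqIntegrand p q (a * u)) (Ioc 0 1) :=
  (arcsinpqIntegrand_comp_mul_continuousOn hq ha).integrableOn_Icc.mono_set Ioc_subset_Icc_self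

theorem arcsinpq_mul_eq (p q a x : ℝ) :
    arcsinpq p q (a * x) = a * ∫ u in (0:ℝ)..x, arcsinpqIntegrand p q (a * u) := by
  have h := intervalIntegral.smul_integral_comp_mul_left (arcsinpqIntegrand p q) a
    (a := 0) (b := x)
  rw [mul_zero, smul_eq_mul] at h
  rw [arcsinpq_eq_integral, h]

theorem arcsinpq_eq_mul_setIntegral (p q a : ℝ) :
    arcsinpq p q a = a * ∫ u in Ioc (0:ℝ) 1, arcsinpqIntegrand p q (a * u) := by
  rw [← intervalIntegral.integral_of_le zero_le_one, ← arcsinpq_mul_eq, mul_one]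

theorem arcsinpq_mul_le_sqrt (hp : 0 < p) (hq : 0 < q) {r s : ℝ} (hr : r ∈ Ico (0:ℝ) 1)
    (hs : s ∈ Ico (0:ℝ) 1) :
    arcsinpq p q (r * s) ≤ √(arcsinpq p q (r ^ 2) * arcsinpq p q (s ^ 2)) := by
  have hrs := mul_mem_Ico_of_mem_Icc hr (Ico_subset_Icc_self hs)
  have hr₂ := sq_mem_Ico hr
  have hs₂ := sq_mem_Ico hs
  have mem {a : ℝ} (ha : a ∈ Ico (0:ℝ) 1) {u : ℝ} (hu : u ∈ Ioc (0:ℝ) 1) :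
      a * u ∈ Ico (0:ℝ) 1 :=
    mul_mem_Ico_of_mem_Icc ha (Ioc_subset_Icc_self hu)
  have ae_nonneg {a : ℝ} (ha : a ∈ Ico (0:ℝ) 1) :
      0 ≤ᵐ[volume.restrict (Ioc 0 1)] fun u => arcsinpqIntegrand p q (a * u) := by
    filter_upwards [ae_restrict_mem measurableSet_Ioc] with u hu
    exact arcsinpqIntegrand_nonneg hp hq (mem ha hu)
  have pointwise : ∀ u ∈ Ioc (0:ℝ) 1, arcsinpqIntegrand p q (r * s * u) ≤
      √(arcsinpqIntegrand p q (r ^ 2 * u)) * √(arcsinpqIntegrand p q (s ^ 2 * u)) :=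
    fun u hu => arcsinpqIntegrand_le_sqrt_mul_sqrt hp hq (mem hr₂ hu) (mem hs₂ hu) (mem hrs hu)
      (by ring)
  have integrableOn_sqrt_mul_sqrt : IntegrableOn (fun u =>
      √(arcsinpqIntegrand p q (r ^ 2 * u)) * √(arcsinpqIntegrand p q (s ^ 2 * u))) (Ioc 0 1) :=
    ((continuous_sqrt.comp_continuousOn (arcsinpqIntegrand_comp_mul_continuousOn hq hr₂)).mul
      (continuous_sqrt.comp_continuousOn (arcsinpqIntegrand_comp_mul_continuousOn hq hs₂))
      ).integrableOn_Icc.mono_set Ioc_subset_Icc_self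
  calc arcsinpq p q (r * s) = r * s * ∫ u in Ioc (0:ℝ) 1, arcsinpqIntegrand p q (r * s * u) :=
        arcsinpq_eq_mul_setIntegral p q (r * s)
    _ ≤ r * s * ∫ u in Ioc (0:ℝ) 1,
          √(arcsinpqIntegrand p q (r ^ 2 * u)) * √(arcsinpqIntegrand p q (s ^ 2 * u)) :=
        mul_le_mul_of_nonneg_left (setIntegral_mono_on
          (integrableOn_arcsinpqIntegrand_comp_mul hq hrs) integrableOn_sqrt_mul_sqrt
          measurableSet_Ioc pointwise) hrs.1
    _ ≤ r * s * (√(∫ u in Ioc (0:ℝ) 1, arcsinpqIntegrand p q (r ^ 2 * u)) *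
          √(∫ u in Ioc (0:ℝ) 1, arcsinpqIntegrand p q (s ^ 2 * u))) :=
        mul_le_mul_of_nonneg_left (integral_sqrt_mul_sqrt_le (ae_nonneg hr₂) (ae_nonneg hs₂)
          (integrableOn_arcsinpqIntegrand_comp_mul hq hr₂)
          (integrableOn_arcsinpqIntegrand_comp_mul hq hs₂)) hrs.1
    _ = √(arcsinpq p q (r ^ 2) * arcsinpq p q (s ^ 2)) := by
        rw [arcsinpq_eq_mul_setIntegral p q (r ^ 2), arcsinpq_eq_mul_setIntegral p q (s ^ 2),
          mul_mul_mul_comm (r ^ 2), ← mul_pow, sqrt_mul (sq_nonneg _), sqrt_sq hrs.1,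
          sqrt_mul (integral_nonneg_of_ae (ae_nonneg hr₂))]

theorem self_le_arcsinpq (hp : 0 < p) (hq : 0 < q) {x : ℝ} (hx : x ∈ Ico (0:ℝ) 1) :
    x ≤ arcsinpq p q x := by
  have hsub : Icc 0 x ⊆ Ico (0:ℝ) 1 := Icc_subset_Ico_right hx.2
  calc x = ∫ _ in (0:ℝ)..x, (1:ℝ) := by simp
    _ ≤ arcsinpq p q x :=
      intervalIntegral.integral_mono_on hx.1 intervalIntegrable_const
        (((arcsinpqIntegrand_continuousOn hq).mono hsub).intervalIntegrable_of_Icc hx.1)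
        fun t ht => one_le_arcsinpqIntegrand hp hq (hsub ht)

theorem arcsinpq_nonneg (hp : 0 < p) (hq : 0 < q) {x : ℝ} (hx : x ∈ Ico (0:ℝ) 1) :
    0 ≤ arcsinpq p q x :=
  hx.1.trans (self_le_arcsinpq hp hq hx)

theorem arcsinpq_sq_le_mul (hp : 0 < p) (hq : 0 < q) {x : ℝ} (hx : x ∈ Ico (0:ℝ) 1) :
    arcsinpq p q (x ^ 2) ≤ x * arcsinpq p q x := by
  have hsub : Icc 0 x ⊆ Icc (0:ℝ) 1 := Icc_subset_Icc_right hx.2.le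
  have hsub' : Icc 0 x ⊆ Ico (0:ℝ) 1 := Icc_subset_Ico_right hx.2
  rw [sq, arcsinpq_mul_eq]
  refine mul_le_mul_of_nonneg_left (intervalIntegral.integral_mono_on hx.1
    (((arcsinpqIntegrand_comp_mul_continuousOn hq hx).mono hsub).intervalIntegrable_of_Icc hx.1)
    (((arcsinpqIntegrand_continuousOn hq).mono hsub').intervalIntegrable_of_Icc hx.1)
    fun t ht => arcsinpqIntegrand_monotoneOn hp hq (mul_mem_Ico_of_mem_Icc hx (hsub ht))
      (hsub' ht) ?_) hx.1
  exact mul_le_of_le_one_left ht.1 hx.2.le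

theorem arcsinpq_sq_le_sq (hp : 0 < p) (hq : 0 < q) {x : ℝ} (hx : x ∈ Ico (0:ℝ) 1) :
    arcsinpq p q (x ^ 2) ≤ arcsinpq p q x ^ 2 :=
  (arcsinpq_sq_le_mul hp hq hx).trans <| by
    rw [sq]
    exact mul_le_mul_of_nonneg_right (self_le_arcsinpq hp hq hx) (arcsinpq_nonneg hp hq hx)

theorem sqrt_arcsinpq_sq_mul_le (hp : 0 < p) (hq : 0 < q) {r s : ℝ} (hr : r ∈ Ico (0:ℝ) 1)
    (hs : s ∈ Ico (0:ℝ) 1) :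
    √(arcsinpq p q (r ^ 2) * arcsinpq p q (s ^ 2)) ≤ arcsinpq p q r * arcsinpq p q s := by
  have hr₀ := arcsinpq_nonneg hp hq hr
  have hs₀ := arcsinpq_nonneg hp hq hs
  rw [sqrt_le_left (mul_nonneg hr₀ hs₀), mul_pow]
  exact mul_le_mul (arcsinpq_sq_le_sq hp hq hr) (arcsinpq_sq_le_sq hp hq hs)
    (arcsinpq_nonneg hp hq (sq_mem_Ico hs)) (sq_nonneg _)

end

theorem stmt9 (p q r s : ℝ) (hp : 1 < p) (hq : 1 < q)
    (hr : r ∈ Ioo (0:ℝ) 1) (hs : s ∈ Ioo (0:ℝ) 1) :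
    arcsinpq p q (r * s) ≤ Real.sqrt (arcsinpq p q (r ^ 2) * arcsinpq p q (s ^ 2)) ∧
      Real.sqrt (arcsinpq p q (r ^ 2) * arcsinpq p q (s ^ 2)) ≤
        arcsinpq p q r * arcsinpq p q s :=
  ⟨arcsinpq_mul_le_sqrt (by linarith) (by linarith) (Ioo_subset_Ico_self hr)
      (Ioo_subset_Ico_self hs),
    sqrt_arcsinpq_sq_mul_le (by linarith) (by linarith) (Ioo_subset_Ico_self hr)
      (Ioo_subset_Ico_self hs)⟩
end

section
/- For p, q, k > 1 and r, s ∈ (0,1) with r ≥ s, one has arsinh_{p,q}(s^k)/arsinh_{p,q}(r^k) ≤ (arsinh_{p,q}(s)/arsinh_{p,q}(r))^k. -/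
/-!
Write `F = arsinh_{p,q}`, so `F' x = (1 + x^q)^(-1/p)`. The elasticity `e x = x F' x / F x` is
decreasing: `e' ≤ 0` amounts to `(1 + (1 - q/p) x^q) F x ≤ x (1 + x^q)^(1 - 1/p)`, and where the
left factor is positive this holds because the quotient of the two sides, `arsinhpqMajorant`,
vanishes at `0` and has derivative at least `F'`. Then `Φ x = log F (x^k) - k log F x` has `Φ' x = (k/x) (e (x^k) - e x) ≥ 0`
on `(0, 1]`, since `x^k ≤ x` there, and `Φ s ≤ Φ r` is the claimed inequality.
-/

open Real Set

noncomputable def arsinhpq (p q x : ℝ) : ℝ :=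
  ∫ t in (0:ℝ)..x, (1 + t ^ q) ^ (-1/p)

open MeasureTheory

theorem hasDerivAt_log_comp_rpow_sub {f f' : ℝ → ℝ} {k y : ℝ}
    (hf : ∀ x, 0 < x → HasDerivAt f (f' x) x) (hpos : ∀ x, 0 < x → 0 < f x) (hy : 0 < y) :
    HasDerivAt (fun x => log (f (x ^ k)) - k * log (f x))
      (k / y * (y ^ k * f' (y ^ k) / f (y ^ k) - y * f' y / f y)) y := by
  have hyk : 0 < y ^ k := rpow_pos_of_pos hy k
  have hcomp := (hf _ hyk).comp y (hasDerivAt_rpow_const (p := k) (Or.inl hy.ne'))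
  refine ((hcomp.log (hpos _ hyk).ne').sub
    (((hf y hy).log (hpos y hy).ne').const_mul k)).congr_deriv ?_
  have hfyk := (hpos _ hyk).ne'
  have hfy := (hpos _ hy).ne'
  rw [Function.comp_apply, rpow_sub_one hy.ne']
  field_simp

theorem div_rpow_le_of_antitoneOn {f f' : ℝ → ℝ} {k r s : ℝ}
    (hf : ∀ x, 0 < x → HasDerivAt f (f' x) x) (hpos : ∀ x, 0 < x → 0 < f x)
    (hanti : AntitoneOn (fun x => x * f' x / f x) (Ioi 0))
    (hk : 1 ≤ k) (hs : 0 < s) (hsr : s ≤ r) (hr : r ≤ 1) :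
    f (s ^ k) / f (r ^ k) ≤ (f s / f r) ^ k := by
  have hr0 : 0 < r := hs.trans_le hsr
  have hmono : MonotoneOn (fun x => log (f (x ^ k)) - k * log (f x)) (Icc s r) := by
    have hderiv : ∀ y ∈ Icc s r, HasDerivAt (fun x => log (f (x ^ k)) - k * log (f x))
        (k / y * (y ^ k * f' (y ^ k) / f (y ^ k) - y * f' y / f y)) y :=
      fun y hy => hasDerivAt_log_comp_rpow_sub hf hpos (hs.trans_le hy.1)
    refine monotoneOn_of_hasDerivWithinAt_nonneg (convex_Icc s r)
      (fun y hy => (hderiv y hy).continuousAt.continuousWithinAt)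
      (fun y hy => (hderiv y (interior_subset hy)).hasDerivWithinAt) ?_
    rw [interior_Icc]
    intro y ⟨hsy, hyr⟩
    have hy : 0 < y := hs.trans hsy
    have hyk : y ^ k ≤ y := rpow_le_self_of_le_one hy.le (hyr.trans_le hr).le hk
    exact mul_nonneg (div_nonneg (by linarith) hy.le)
      (sub_nonneg.2 (hanti (rpow_pos_of_pos hy k) hy hyk))
  have key := hmono (left_mem_Icc.2 hsr) (right_mem_Icc.2 hsr) hsr
  have hfs := hpos s hs
  have hfr := hpos r hr0
  have hfsk := hpos _ (rpow_pos_of_pos hs k)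
  have hfrk := hpos _ (rpow_pos_of_pos hr0 k)
  rw [← log_le_log_iff (div_pos hfsk hfrk) (rpow_pos_of_pos (div_pos hfs hfr) k),
    log_div hfsk.ne' hfrk.ne', log_rpow (div_pos hfs hfr), log_div hfs.ne' hfr.ne']
  linarith

section

variable {p q : ℝ}

lemma one_add_rpow_pos {x : ℝ} (hx : 0 ≤ x) : 0 < 1 + x ^ q := by
  linarith [rpow_nonneg hx q]

lemma continuousOn_one_add_rpow_rpow (hq : 0 ≤ q) :
    ContinuousOn (fun t : ℝ => (1 + t ^ q) ^ (-1/p)) (Ici 0) :=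
  (continuousOn_const.add (continuousOn_id.rpow_const fun _ _ => Or.inr hq)).rpow_const
    fun _ ht => Or.inl (one_add_rpow_pos ht).ne'

lemma integrableOn_one_add_rpow_rpow (hq : 0 ≤ q) (x : ℝ) :
    IntegrableOn (fun t : ℝ => (1 + t ^ q) ^ (-1/p)) (Icc 0 x) :=
  ((continuousOn_one_add_rpow_rpow hq).mono Icc_subset_Ici_self).integrableOn_Icc

lemma intervalIntegrable_one_add_rpow_rpow (hq : 0 ≤ q) {x : ℝ} (hx : 0 ≤ x) :
    IntervalIntegrable (fun t : ℝ => (1 + t ^ q) ^ (-1/p)) volume 0 x :=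
  (intervalIntegrable_iff_integrableOn_Icc_of_le hx).2 (integrableOn_one_add_rpow_rpow hq x)

lemma arsinhpq_zero : arsinhpq p q 0 = 0 :=
  intervalIntegral.integral_same

lemma arsinhpq_pos (hq : 0 ≤ q) {x : ℝ} (hx : 0 < x) : 0 < arsinhpq p q x :=
  intervalIntegral.intervalIntegral_pos_of_pos_on (intervalIntegrable_one_add_rpow_rpow hq hx.le)
    (fun _ ht => rpow_pos_of_pos (one_add_rpow_pos ht.1.le) _) hx

lemma hasDerivAt_arsinhpq (hq : 0 ≤ q) {x : ℝ} (hx : 0 < x) :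
    HasDerivAt (arsinhpq p q) ((1 + x ^ q) ^ (-1/p)) x :=
  intervalIntegral.integral_hasDerivAt_right (intervalIntegrable_one_add_rpow_rpow hq hx.le)
    (((continuousOn_one_add_rpow_rpow hq).mono Ioi_subset_Ici_self).stronglyMeasurableAtFilter
      isOpen_Ioi _ hx)
    ((continuousOn_one_add_rpow_rpow hq).continuousAt (Ici_mem_nhds hx))

lemma continuousOn_arsinhpq (hq : 0 ≤ q) {z : ℝ} (hz : 0 ≤ z) :
    ContinuousOn (arsinhpq p q) (Icc 0 z) := by
  have := intervalIntegral.continuousOn_primitive_interval (μ := volume)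
    (uIcc_of_le hz ▸ integrableOn_one_add_rpow_rpow (p := p) hq z)
  rwa [uIcc_of_le hz] at this

lemma one_add_rpow_one_sub_inv (p : ℝ) {x : ℝ} (hx : 0 ≤ x) :
    (1 + x ^ q) ^ (1 - 1/p) = (1 + x ^ q) ^ (-1/p) * (1 + x ^ q) := by
  rw [← rpow_add_one (one_add_rpow_pos hx).ne']
  ring_nf

noncomputable def arsinhpqMajorant (p q x : ℝ) : ℝ :=
  x * (1 + x ^ q) ^ (1 - 1/p) / (1 + (1 - q/p) * x ^ q)

lemma hasDerivAt_arsinhpqMajorant (hp : 0 < p) {x : ℝ} (hx : 0 < x)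
    (hD : 0 < 1 + (1 - q/p) * x ^ q) :
    HasDerivAt (arsinhpqMajorant p q)
      ((1 + x ^ q) ^ (-1/p) * (1 + q ^ 2 * x ^ q / (p * (1 + (1 - q/p) * x ^ q) ^ 2))) x := by
  have hW := one_add_rpow_pos (q := q) hx.le
  have hxq : HasDerivAt (fun y : ℝ => y ^ q) (q * x ^ (q - 1)) x :=
    hasDerivAt_rpow_const (Or.inl hx.ne')
  have hnum := (hasDerivAt_id x).mul ((hxq.const_add 1).rpow_const (p := 1 - 1/p) (Or.inl hW.ne'))
  refine (hnum.div ((hxq.const_mul (1 - q/p)).const_add 1) hD.ne').congr_deriv ?_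
  simp only [id, Pi.mul_apply]
  rw [show 1 - 1/p - 1 = -1/p by ring, one_add_rpow_one_sub_inv p hx.le, rpow_sub_one hx.ne']
  -- `field_simp` has to clear `D` as an atom before `q/p` inside it is cleared
  set D := 1 + (1 - q/p) * x ^ q with hD_def
  have hD₀ := hD.ne'
  field_simp
  rw [hD_def]
  field_simp
  ring

lemma one_add_mul_rpow_pos_of_le (hq : 0 ≤ q) {b x z : ℝ} (hx : 0 ≤ x) (hxz : x ≤ z)
    (hz : 0 < 1 + b * z ^ q) : 0 < 1 + b * x ^ q := by
  rcases le_or_gt 0 b with hb | hb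
  · linarith [mul_nonneg hb (rpow_nonneg hx q)]
  · nlinarith [rpow_le_rpow hx hxz hq]

lemma continuousOn_arsinhpqMajorant (hq : 0 ≤ q) {z : ℝ}
    (hD : ∀ y ∈ Icc 0 z, 0 < 1 + (1 - q/p) * y ^ q) :
    ContinuousOn (arsinhpqMajorant p q) (Icc 0 z) := by
  have hrpow : ContinuousOn (fun y : ℝ => y ^ q) (Icc 0 z) :=
    continuousOn_id.rpow_const fun _ _ => Or.inr hq
  refine ContinuousOn.div ?_ ?_ fun y hy => (hD y hy).ne'
  · exact continuousOn_id.mul ((continuousOn_const.add hrpow).rpow_const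
      fun y hy => Or.inl (one_add_rpow_pos hy.1).ne')
  · exact continuousOn_const.add (hrpow.const_mul _)

lemma arsinhpq_le_arsinhpqMajorant (hp : 0 < p) (hq : 0 ≤ q) {z : ℝ} (hz : 0 ≤ z)
    (hD : 0 < 1 + (1 - q/p) * z ^ q) :
    arsinhpq p q z ≤ arsinhpqMajorant p q z := by
  have hDpos : ∀ y ∈ Icc 0 z, 0 < 1 + (1 - q/p) * y ^ q :=
    fun y hy => one_add_mul_rpow_pos_of_le hq hy.1 hy.2 hD
  have hderiv : ∀ y ∈ Ioo 0 z, HasDerivAt (arsinhpqMajorant p q - arsinhpq p q)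
      ((1 + y ^ q) ^ (-1/p) * (1 + q ^ 2 * y ^ q / (p * (1 + (1 - q/p) * y ^ q) ^ 2))
        - (1 + y ^ q) ^ (-1/p)) y := fun y hy =>
    (hasDerivAt_arsinhpqMajorant hp hy.1 (hDpos y (Ioo_subset_Icc_self hy))).sub
      (hasDerivAt_arsinhpq hq hy.1)
  have hmono : MonotoneOn (arsinhpqMajorant p q - arsinhpq p q) (Icc 0 z) := by
    refine monotoneOn_of_hasDerivWithinAt_nonneg (convex_Icc 0 z)
      ((continuousOn_arsinhpqMajorant hq hDpos).sub (continuousOn_arsinhpq hq hz))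
      (fun y hy => (hderiv y (by rwa [interior_Icc] at hy)).hasDerivWithinAt) ?_
    rw [interior_Icc]
    intro y hy
    have hy₀ := hy.1
    rw [mul_one_add, add_sub_cancel_left]
    positivity
  have h := hmono (left_mem_Icc.2 hz) (right_mem_Icc.2 hz) hz
  have hG₀ : arsinhpqMajorant p q 0 = 0 := by simp [arsinhpqMajorant]
  simpa [hG₀, arsinhpq_zero] using h

lemma mul_arsinhpq_le (hp : 0 < p) (hq : 0 ≤ q) {x : ℝ} (hx : 0 < x) :
    (1 + (1 - q/p) * x ^ q) * arsinhpq p q x ≤ x * (1 + x ^ q) ^ (1 - 1/p) := by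
  rcases le_or_gt (1 + (1 - q/p) * x ^ q) 0 with hD | hD
  · have := rpow_pos_of_pos (one_add_rpow_pos (q := q) hx.le) (1 - 1/p)
    nlinarith [arsinhpq_pos (p := p) hq hx]
  · rw [← le_div_iff₀' hD]
    exact arsinhpq_le_arsinhpqMajorant hp hq hx.le hD

lemma hasDerivAt_elasticity_arsinhpq (hq : 0 ≤ q) {x : ℝ} (hx : 0 < x) :
    HasDerivAt (fun y => y * (1 + y ^ q) ^ (-1/p) / arsinhpq p q y)
      ((1 + x ^ q) ^ (-1/p) * ((1 + (1 - q/p) * x ^ q) * arsinhpq p q x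
        - x * (1 + x ^ q) ^ (1 - 1/p)) / ((1 + x ^ q) * arsinhpq p q x ^ 2)) x := by
  have hW := one_add_rpow_pos (q := q) hx.le
  have hF := (arsinhpq_pos (p := p) hq hx).ne'
  have hxq : HasDerivAt (fun y : ℝ => y ^ q) (q * x ^ (q - 1)) x :=
    hasDerivAt_rpow_const (Or.inl hx.ne')
  have hnum := (hasDerivAt_id x).mul ((hxq.const_add 1).rpow_const (p := -1/p) (Or.inl hW.ne'))
  refine (hnum.div (hasDerivAt_arsinhpq hq hx) hF).congr_deriv ?_
  simp only [id, Pi.mul_apply]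
  rw [one_add_rpow_one_sub_inv p hx.le, rpow_sub_one hx.ne', rpow_sub_one hW.ne']
  field_simp
  ring

lemma antitoneOn_elasticity_arsinhpq (hp : 0 < p) (hq : 0 ≤ q) :
    AntitoneOn (fun x => x * (1 + x ^ q) ^ (-1/p) / arsinhpq p q x) (Ioi 0) := by
  refine antitoneOn_of_hasDerivWithinAt_nonpos (convex_Ioi 0)
    (fun x hx => (hasDerivAt_elasticity_arsinhpq hq hx).continuousAt.continuousWithinAt)
    (fun x hx => (hasDerivAt_elasticity_arsinhpq hq (interior_subset hx)).hasDerivWithinAt) ?_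
  rw [interior_Ioi]
  intro x hx
  have hW := one_add_rpow_pos (q := q) hx.le
  exact div_nonpos_of_nonpos_of_nonneg
    (mul_nonpos_of_nonneg_of_nonpos (rpow_pos_of_pos hW _).le
      (sub_nonpos.2 (mul_arsinhpq_le hp hq hx)))
    (by positivity)

end

theorem stmt14 (p q k r s : ℝ) (hp : 1 < p) (hq : 1 < q) (hk : 1 < k)
    (hr : r ∈ Ioo (0:ℝ) 1) (hs : s ∈ Ioo (0:ℝ) 1) (hrs : s ≤ r) :
    arsinhpq p q (s ^ k) / arsinhpq p q (r ^ k) ≤ (arsinhpq p q s / arsinhpq p q r) ^ k := by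
  have hq₀ : 0 ≤ q := zero_le_one.trans hq.le
  exact div_rpow_le_of_antitoneOn (fun _ hx => hasDerivAt_arsinhpq hq₀ hx)
    (fun _ hx => arsinhpq_pos hq₀ hx) (antitoneOn_elasticity_arsinhpq (zero_lt_one.trans hp) hq₀)
    hk.le hs.1 hrs hr.2.le
end
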